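/- Let $F(x)=\psi(|x|)$ be the rotationally invariant function from the counterexample (with $\psi(r)=(1-r)^2$ for $r\ge 1/2$). Then $F$ is a Łojasiewicz function: at the origin the Łojasiewicz inequality holds with exponent $\theta=1/2$ on some neighbourhood (since the Hessian at $0$ equals $-6\,\mathrm{Id}$ and has full rank), and for every $x$ with $|x|=1$ there exist $\varepsilon\in(0,1/2]$ and $L>0$ with $|\nabla F(y)|\ge L|F(y)-F(x)|^{1/2}$ for all $y$ with $1-\varepsilon<|y|<1+\varepsilon$. -/

import Mathlib

noncomputable def ψ : ℝ → ℝ := fun r =>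
  if (1/2 : ℝ) ≤ r then (1 - r)^2 else (8/3) * r^3 - 3 * r^2 + 2/3

noncomputable def Fcounter : EuclideanSpace ℝ (Fin 2) → ℝ := fun x => ψ ‖x‖

/-! $F$ is radial, so away from the origin $|\nabla F(y)| = |\psi'(|y|)|$ and both inequalities
reduce to one-variable facts about $\psi$. Near the unit circle $\psi(r) = (1-r)^2$, so
$|\psi'| = 2\sqrt{\psi}$ exactly. Near $0$, $|\psi(r) - \psi(0)| = r^2 (3 - 8r/3) \le 3r^2$ while
$|\psi'(r)| = r(6 - 8r) \ge 2r$. -/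

open Real InnerProductSpace

section Radial

variable {E : Type*} [NormedAddCommGroup E] [InnerProductSpace ℝ E]

theorem hasFDerivAt_norm {x : E} (hx : x ≠ 0) :
    HasFDerivAt (‖·‖) (‖x‖⁻¹ • innerSL ℝ x) x := by
  have hsq := ((hasStrictFDerivAt_norm_sq x).hasFDerivAt).sqrt (by positivity)
  simp only [sqrt_sq (norm_nonneg _)] at hsq
  convert hsq using 1
  ext v
  simp only [smul_apply, coe_innerSL_apply, smul_eq_mul, one_div, mul_inv_rev, nsmul_eq_mul,
    Nat.cast_ofNat]
  field_simp

variable [CompleteSpace E]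

theorem hasGradientAt_comp_norm {φ : ℝ → ℝ} {φ' : ℝ} {x : E} (hx : x ≠ 0)
    (hφ : HasDerivAt φ φ' ‖x‖) :
    HasGradientAt (fun y => φ ‖y‖) ((φ' / ‖x‖) • x) x := by
  rw [hasGradientAt_iff_hasFDerivAt]
  refine (hφ.comp_hasFDerivAt x (hasFDerivAt_norm hx)).congr_fderiv ?_
  ext v
  simp only [smul_apply, coe_innerSL_apply, smul_eq_mul, map_smul, toDual_apply_apply]
  ring

theorem norm_gradient_comp_norm {φ : ℝ → ℝ} {φ' : ℝ} {x : E} (hx : x ≠ 0)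
    (hφ : HasDerivAt φ φ' ‖x‖) :
    ‖gradient (fun y => φ ‖y‖) x‖ = |φ'| := by
  rw [(hasGradientAt_comp_norm hx hφ).gradient, norm_smul, norm_div, norm_norm,
    div_mul_cancel₀ _ (norm_ne_zero_iff.2 hx), Real.norm_eq_abs]

end Radial

theorem ψ_of_lt {r : ℝ} (hr : r < 1/2) : ψ r = 8/3 * r^3 - 3 * r^2 + 2/3 := if_neg hr.not_ge

theorem ψ_of_ge {r : ℝ} (hr : 1/2 ≤ r) : ψ r = (1 - r)^2 := if_pos hr

theorem hasDerivAt_ψ_of_lt {r : ℝ} (hr : r < 1/2) : HasDerivAt ψ (8 * r^2 - 6 * r) r := by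
  have hpoly := (((hasDerivAt_pow 3 r).const_mul (8/3)).sub
    ((hasDerivAt_pow 2 r).const_mul 3)).add_const (2/3)
  refine (hpoly.congr_deriv (by norm_num; ring)).congr_of_eventuallyEq ?_
  filter_upwards [eventually_lt_nhds hr] with s hs
  simp [ψ_of_lt hs]

theorem hasDerivAt_ψ_of_gt {r : ℝ} (hr : 1/2 < r) : HasDerivAt ψ (2 * (r - 1)) r := by
  have hpoly := ((hasDerivAt_id r).const_sub 1).pow 2
  refine (hpoly.congr_deriv (by norm_num; ring)).congr_of_eventuallyEq ?_
  filter_upwards [eventually_gt_nhds hr] with s hs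
  simp [ψ_of_ge hs.le]

theorem abs_ψ_sub_ψ_zero_rpow_le {r : ℝ} (hr : r < 1/2) :
    |ψ r - ψ 0| ^ (1/2 : ℝ) ≤ |8 * r^2 - 6 * r| := by
  have hψ : |ψ r - ψ 0| = r^2 * (3 - 8/3 * r) := by
    rw [ψ_of_lt hr, ψ_of_lt (by norm_num), abs_of_nonpos (by nlinarith)]
    ring
  rw [← sqrt_eq_rpow, ← sqrt_sq_eq_abs (8 * r^2 - 6 * r), hψ]
  exact sqrt_le_sqrt (by nlinarith [sq_nonneg r])

theorem two_mul_abs_ψ_sub_ψ_one_rpow {r : ℝ} (hr : 1/2 ≤ r) :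
    2 * |ψ r - ψ 1| ^ (1/2 : ℝ) = |2 * (r - 1)| := by
  rw [ψ_of_ge hr, ψ_of_ge (by norm_num), ← sqrt_eq_rpow]
  norm_num [sqrt_sq_eq_abs, abs_sub_comm]

theorem Fcounter_lojasiewicz :
    (∃ (L : ℝ), 0 < L ∧ ∃ U ∈ nhds (0 : EuclideanSpace ℝ (Fin 2)),
      ∀ y ∈ U, L * |Fcounter y - Fcounter 0| ^ ((1:ℝ)/2) ≤ ‖gradient Fcounter y‖) ∧
    (∀ x : EuclideanSpace ℝ (Fin 2), ‖x‖ = 1 →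
      ∃ ε : ℝ, 0 < ε ∧ ε ≤ 1/2 ∧ ∃ L : ℝ, 0 < L ∧
        ∀ y : EuclideanSpace ℝ (Fin 2), 1 - ε < ‖y‖ → ‖y‖ < 1 + ε →
          L * |Fcounter y - Fcounter x| ^ ((1:ℝ)/2) ≤ ‖gradient Fcounter y‖) := by
  refine ⟨⟨1, one_pos, Metric.ball 0 (1/2), Metric.ball_mem_nhds _ (by norm_num), ?_⟩, ?_⟩
  · intro y hy
    rw [mem_ball_zero_iff] at hy
    rcases eq_or_ne y 0 with rfl | hy0
    · simp
    · unfold Fcounter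
      rw [one_mul, norm_zero, norm_gradient_comp_norm hy0 (hasDerivAt_ψ_of_lt hy)]
      exact abs_ψ_sub_ψ_zero_rpow_le hy
  · intro x hx
    refine ⟨1/2, by norm_num, le_rfl, 2, two_pos, fun y hy _ => ?_⟩
    have hy' : 1/2 < ‖y‖ := by linarith
    have hy0 : y ≠ 0 := norm_pos_iff.1 (by linarith)
    unfold Fcounter
    rw [hx, norm_gradient_comp_norm hy0 (hasDerivAt_ψ_of_gt hy')]
    exact (two_mul_abs_ψ_sub_ψ_one_rpow hy'.le).le
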